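/- arXiv:2507.02736 — 7 statements merged into one kernel-verified Lean document; each statement's English description precedes it below -/
import Mathlib

section
/- (Floquet–Lyapunov theorem) Let T > 0, let H : ℝ → Matrix (Fin n) (Fin n) ℝ be continuous and T-periodic, and let U : ℝ → Matrix (Fin n) (Fin n) ℝ satisfy U(0) = 1, U'(t) = H(t) * U(t) for all t, with U(t) invertible for every t. Suppose H̃ is a matrix with Matrix.exp (T • H̃) = U(T). Then the function P(t) := U(t) * Matrix.exp (−t • H̃) is T-periodic, i.e. P(t+T) = P(t) for all t; in particular U(t) = P(t) * Matrix.exp (t • H̃) for all t with P being T-periodic. -/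
/-!
Two solutions `V`, `W` of the same linear equation `x' = H x` with `V` invertible satisfy
`(V⁻¹ W)' = -V⁻¹ H V V⁻¹ W + V⁻¹ H W = 0`, so `V⁻¹ W` is constant. Applied to `V = U` and
`W = U (· + T)`, which solves the same equation because `H` is `T`-periodic, this gives the
monodromy relation `U (t + T) = U t * U T`. With `U T = exp (T • H̃)` and the addition formula for
commuting exponents, the factor `U T` is absorbed by `exp (-(T • H̃))`.
-/

attribute [local instance] Matrix.linftyOpNormedRing Matrix.linftyOpNormedAlgebra

open NormedSpace

section Propagator

open scoped Ring

variable {𝔸 : Type*} [NormedRing 𝔸] [HasSummableGeomSeries 𝔸]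

theorem HasDerivAt.ringInverse {𝕜 : Type*} [NontriviallyNormedField 𝕜] [NormedAlgebra 𝕜 𝔸]
    {U : 𝕜 → 𝔸} {U' : 𝔸} {t : 𝕜} (hU : HasDerivAt U U' t) (ht : IsUnit (U t)) :
    HasDerivAt (fun s => (U s)⁻¹ʳ) (-((U t)⁻¹ʳ * U' * (U t)⁻¹ʳ)) t := by
  obtain ⟨u, hu⟩ := ht
  have hinv : HasFDerivAt Ring.inverse (-ContinuousLinearMap.mulLeftRight 𝕜 𝔸 ↑u⁻¹ ↑u⁻¹) (U t) :=
    hu ▸ hasFDerivAt_ringInverse u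
  simpa [← hu, Function.comp_def] using hinv.comp_hasDerivAt t hU

variable [NormedAlgebra ℝ 𝔸]

theorem ringInverse_mul_eq_of_hasDerivAt_mul_left {H V W : ℝ → 𝔸}
    (hV : ∀ t, HasDerivAt V (H t * V t) t) (hW : ∀ t, HasDerivAt W (H t * W t) t)
    (hVunit : ∀ t, IsUnit (V t)) (t s : ℝ) :
    (V t)⁻¹ʳ * W t = (V s)⁻¹ʳ * W s := by
  have hderiv : ∀ t, HasDerivAt (fun t => (V t)⁻¹ʳ * W t) 0 t := by
    intro t
    refine (((hV t).ringInverse (hVunit t)).mul (hW t)).congr_deriv ?_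
    have hcancel : (V t)⁻¹ʳ * (H t * V t) * (V t)⁻¹ʳ = (V t)⁻¹ʳ * H t := by
      rw [mul_assoc, mul_assoc, Ring.mul_inverse_cancel _ (hVunit t), mul_one]
    rw [hcancel, neg_mul, mul_assoc, neg_add_cancel]
  exact is_const_of_deriv_eq_zero (fun t => (hderiv t).differentiableAt)
    (fun t => (hderiv t).deriv) t s

theorem propagator_add_period {H U : ℝ → 𝔸} {T : ℝ} (hH : Function.Periodic H T)
    (hU0 : U 0 = 1) (hU : ∀ t, HasDerivAt U (H t * U t) t) (hUunit : ∀ t, IsUnit (U t))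
    (t : ℝ) : U (t + T) = U t * U T := by
  have hshift : ∀ t, HasDerivAt (fun t => U (t + T)) (H t * U (t + T)) t := fun t => by
    simpa only [hH t] using (hU (t + T)).comp_add_const t T
  have hconst := ringInverse_mul_eq_of_hasDerivAt_mul_left hU hshift hUunit t 0
  rw [hU0, Ring.inverse_one, one_mul, zero_add] at hconst
  rw [← hconst, ← mul_assoc, Ring.mul_inverse_cancel _ (hUunit t), one_mul]

end Propagator

namespace Matrix

variable {m 𝔸 : Type*} [Fintype m] [DecidableEq m] [NormedRing 𝔸] [NormedAlgebra ℚ 𝔸]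
  [CompleteSpace 𝔸]

theorem exp_neg_mul_exp (A : Matrix m m 𝔸) : exp (-A) * exp A = 1 := by
  rw [← exp_add_of_commute _ _ (Commute.refl A).neg_left, neg_add_cancel, exp_zero]

theorem exp_mul_exp_neg (A : Matrix m m 𝔸) : exp A * exp (-A) = 1 := by
  simpa only [neg_neg] using exp_neg_mul_exp (-A)

theorem exp_neg_add_of_commute (A B : Matrix m m 𝔸) (h : Commute A B) :
    exp (-(A + B)) = exp (-B) * exp (-A) := by
  rw [neg_add_rev, exp_add_of_commute _ _ h.symm.neg_left.neg_right]

end Matrix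

theorem floquet_lyapunov_general (n : ℕ) (T : ℝ)
    (H U : ℝ → Matrix (Fin n) (Fin n) ℝ)
    (hHper : ∀ t, H (t + T) = H t)
    (hU0 : U 0 = 1)
    (hU : ∀ t, HasDerivAt U (H t * U t) t)
    (hUinv : ∀ t, IsUnit (U t))
    (Htilde : Matrix (Fin n) (Fin n) ℝ)
    (hFloq : exp (T • Htilde) = U T) :
    (∀ t, U (t + T) * exp (-((t + T) • Htilde)) = U t * exp (-(t • Htilde))) ∧
      (∀ t, U t = (U t * exp (-(t • Htilde))) * exp (t • Htilde)) := by
  refine ⟨fun t => ?_, fun t => by rw [mul_assoc, Matrix.exp_neg_mul_exp, mul_one]⟩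
  have hcomm : Commute (t • Htilde) (T • Htilde) :=
    ((Commute.refl Htilde).smul_left t).smul_right T
  calc U (t + T) * exp (-((t + T) • Htilde))
      = U t * (exp (T • Htilde) * exp (-(T • Htilde))) * exp (-(t • Htilde)) := by
        rw [propagator_add_period hHper hU0 hU hUinv, add_smul,
          Matrix.exp_neg_add_of_commute _ _ hcomm, hFloq]
        simp only [mul_assoc]
    _ = U t * exp (-(t • Htilde)) := by rw [Matrix.exp_mul_exp_neg, mul_one]

/-- **Floquet–Lyapunov theorem.** If `H` is continuous and `T`-periodic, `U` is the
propagator of `x' = H(t) x` with `U t` invertible for all `t`, and `H̃` is a Floquet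
Hamiltonian, i.e. `exp (T • H̃) = U T`, then `P t := U t * exp (-(t • H̃))` is
`T`-periodic and `U t = P t * exp (t • H̃)` for all `t`. -/
theorem floquet_lyapunov (n : ℕ) (T : ℝ) (hT : 0 < T)
    (H U : ℝ → Matrix (Fin n) (Fin n) ℝ)
    (hHcont : Continuous H)
    (hHper : ∀ t, H (t + T) = H t)
    (hU0 : U 0 = 1)
    (hU : ∀ t, HasDerivAt U (H t * U t) t)
    (hUinv : ∀ t, IsUnit (U t))
    (Htilde : Matrix (Fin n) (Fin n) ℝ)
    (hFloq : exp (T • Htilde) = U T) :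
    (∀ t, U (t + T) * exp (-((t + T) • Htilde)) = U t * exp (-(t • Htilde))) ∧
      (∀ t, U t = (U t * exp (-(t • Htilde))) * exp (t • Htilde)) :=
  floquet_lyapunov_general n T H U hHper hU0 hU hUinv Htilde hFloq
end

section
/- Let A : Matrix (Fin n) (Fin n) ℂ. Then ‖Matrix.exp (t • A)‖ tends to 0 as t → ∞ along the reals if and only if every eigenvalue λ in the spectrum of A satisfies Re λ < 0. -/
/-!
If `μ` is an eigenvalue of `A`, then `e^{tμ}` lies in the spectrum of `exp (t • A)`, so
`e^{t Re μ} ≤ ‖exp (t • A)‖ * ‖1‖`, which forces `Re μ < 0` when the norm tends to zero.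
Conversely, on the generalized eigenspace of `μ` the matrix `A - μ` acts nilpotently, and
`exp (t • A) = e^{tμ} • exp (t • (A - μ))` applied to a vector there is `e^{tμ}` times a
polynomial in `t`, which tends to zero when `Re μ < 0`; the generalized eigenspaces span `ℂⁿ`.
-/

attribute [local instance] Matrix.linftyOpNormedRing Matrix.linftyOpNormedAlgebra

open NormedSpace

open Filter Topology Matrix Nat

theorem spectrum.re_neg_of_tendsto_norm_exp_smul {𝔸 : Type*} [NormedRing 𝔸] [NormedAlgebra ℂ 𝔸]
    [CompleteSpace 𝔸] {a : 𝔸} (h : Tendsto (fun t : ℝ => ‖exp (t • a)‖) atTop (𝓝 0)) {μ : ℂ}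
    (hμ : μ ∈ spectrum ℂ a) : μ.re < 0 := by
  have hbound (t : ℝ) (ht : 0 < t) : Real.exp (t * μ.re) ≤ ‖exp (t • a)‖ * ‖(1 : 𝔸)‖ := by
    have hmem : (t : ℂ) * μ ∈ spectrum ℂ ((t : ℂ) • a) :=
      spectrum.smul_mem_smul_iff (r := Units.mk0 (t : ℂ) (by exact_mod_cast ht.ne')) |>.2 hμ
    have := spectrum.norm_le_norm_mul_of_mem (spectrum.exp_mem_exp _ hmem)
    rwa [← Complex.exp_eq_exp_ℂ, Complex.norm_exp, Complex.re_ofReal_mul, Complex.coe_smul] at this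
  have hsmall : ∀ᶠ t : ℝ in atTop, ‖exp (t • a)‖ * ‖(1 : 𝔸)‖ < 1 := by
    have := h.mul_const ‖(1 : 𝔸)‖
    rw [zero_mul] at this
    exact this.eventually (gt_mem_nhds one_pos)
  obtain ⟨t, hlt, ht⟩ := (hsmall.and (eventually_gt_atTop 0)).exists
  by_contra! hre
  have := (hbound t ht).trans_lt hlt
  have : 1 ≤ Real.exp (t * μ.re) := Real.one_le_exp (mul_nonneg ht.le hre)
  linarith

theorem Module.End.mem_spectrum_of_mem_maxGenEigenspace {K V : Type*} [Field K] [AddCommGroup V]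
    [Module K V] {f : Module.End K V} {μ : K} {v : V} (hv : v ∈ f.maxGenEigenspace μ)
    (hv0 : v ≠ 0) : μ ∈ spectrum K f :=
  (HasUnifEigenvalue.lt zero_lt_one ((Submodule.ne_bot_iff _).2 ⟨v, hv, hv0⟩)).mem_spectrum

theorem Complex.tendsto_exp_mul_mul_pow_atTop {μ : ℂ} (hμ : μ.re < 0) (m : ℕ) :
    Tendsto (fun t : ℝ => exp (t * μ) * (t : ℂ) ^ m) atTop (𝓝 0) := by
  rw [tendsto_zero_iff_norm_tendsto_zero]
  refine ((isLittleO_pow_exp_pos_mul_atTop m (neg_pos.2 hμ)).tendsto_div_nhds_zero).congr' ?_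
  filter_upwards [eventually_ge_atTop 0] with t ht
  rw [norm_mul, norm_exp, norm_pow, norm_real, Real.norm_of_nonneg ht, re_ofReal_mul,
    div_eq_mul_inv, ← Real.exp_neg, mul_comm]
  ring_nf

namespace Matrix

theorem tendsto_zero_of_forall_tendsto_mulVec {m n R α : Type*} [Fintype n] [DecidableEq n]
    [Semiring R] [TopologicalSpace R] {l : Filter α} {M : α → Matrix m n R}
    (h : ∀ v, Tendsto (fun x => M x *ᵥ v) l (𝓝 0)) : Tendsto M l (𝓝 0) := by
  refine tendsto_pi_nhds.2 fun i => tendsto_pi_nhds.2 fun j => ?_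
  simpa [mulVec_single] using tendsto_pi_nhds.1 (h (Pi.single j 1)) i

variable {ι : Type*} [Fintype ι] [DecidableEq ι]

theorem exp_eq_exp_smul_exp_sub (A : Matrix ι ι ℂ) (μ : ℂ) :
    exp A = Complex.exp μ • exp (A - μ • 1) := by
  have hcomm : Commute (A - μ • 1) (μ • 1) := (Commute.one_right _).smul_right μ
  have hscalar : exp (μ • 1 : Matrix ι ι ℂ) = Complex.exp μ • 1 := by
    rw [smul_one_eq_diagonal, smul_one_eq_diagonal, exp_diagonal, Pi.exp_def,
      Complex.exp_eq_exp_ℂ]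
  conv_lhs => rw [← sub_add_cancel A (μ • 1)]
  rw [exp_add_of_commute _ _ hcomm, hscalar, mul_smul_one]

theorem exp_mulVec_eq_sum_of_pow_mulVec_eq_zero {N : Matrix ι ι ℂ} {v : ι → ℂ} {k : ℕ}
    (hv : N ^ k *ᵥ v = 0) :
    exp N *ᵥ v = ∑ m ∈ Finset.range k, (m !⁻¹ : ℂ) • (N ^ m *ᵥ v) := by
  have hseries : HasSum (fun m => ((m !⁻¹ : ℂ) • N ^ m) *ᵥ v) (exp N *ᵥ v) :=
    (exp_series_hasSum_exp' (𝕂 := ℂ) N).map (mulVec.addMonoidHomLeft v)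
      (continuous_id.matrix_mulVec continuous_const)
  simp only [smul_mulVec] at hseries
  refine hseries.unique (hasSum_sum_of_ne_finset_zero fun m hm => ?_)
  obtain ⟨j, rfl⟩ := Nat.exists_eq_add_of_le (not_lt.1 (Finset.mem_range.not.1 hm))
  rw [add_comm, pow_add, ← mulVec_mulVec, hv, mulVec_zero, smul_zero]

theorem tendsto_exp_smul_mulVec_of_pow_mulVec_eq_zero {A : Matrix ι ι ℂ} {μ : ℂ} (hμ : μ.re < 0)
    {v : ι → ℂ} {k : ℕ} (hv : (A - μ • 1) ^ k *ᵥ v = 0) :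
    Tendsto (fun t : ℝ => exp (t • A) *ᵥ v) atTop (𝓝 0) := by
  set N := A - μ • 1
  have hexp (t : ℝ) : exp (t • A) *ᵥ v =
      ∑ m ∈ Finset.range k, (Complex.exp (t * μ) * (t : ℂ) ^ m * (m !⁻¹ : ℂ)) • (N ^ m *ᵥ v) := by
    have hshift : (t : ℂ) • A - ((t : ℂ) * μ) • 1 = (t : ℂ) • N := by
      rw [smul_sub, smul_smul]
    have hvt : ((t : ℂ) • N) ^ k *ᵥ v = 0 := by rw [smul_pow, smul_mulVec, hv, smul_zero]
    rw [← Complex.coe_smul, exp_eq_exp_smul_exp_sub _ ((t : ℂ) * μ), hshift, smul_mulVec,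
      exp_mulVec_eq_sum_of_pow_mulVec_eq_zero hvt, Finset.smul_sum]
    refine Finset.sum_congr rfl fun m _ => ?_
    rw [smul_pow, smul_mulVec, smul_smul, smul_smul]
    ring_nf
  simp_rw [hexp]
  simpa using tendsto_finsetSum (Finset.range k) fun m _ =>
    ((Complex.tendsto_exp_mul_mul_pow_atTop hμ m).mul_const (m !⁻¹ : ℂ)).smul_const (N ^ m *ᵥ v)

theorem tendsto_exp_smul_mulVec_of_mem_maxGenEigenspace {A : Matrix ι ι ℂ} {μ : ℂ}
    (hμ : μ.re < 0) {v : ι → ℂ} (hv : v ∈ Module.End.maxGenEigenspace (toLin' A) μ) :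
    Tendsto (fun t : ℝ => exp (t • A) *ᵥ v) atTop (𝓝 0) := by
  obtain ⟨k, hk⟩ := (Module.End.mem_maxGenEigenspace _ _ _).1 hv
  refine tendsto_exp_smul_mulVec_of_pow_mulVec_eq_zero hμ (k := k) ?_
  rwa [← toLin'_apply, toLin'_pow, map_sub, map_smul, toLin'_one]

theorem tendsto_exp_smul_mulVec {A : Matrix ι ι ℂ} (hA : ∀ μ ∈ spectrum ℂ A, μ.re < 0)
    (v : ι → ℂ) : Tendsto (fun t : ℝ => exp (t • A) *ᵥ v) atTop (𝓝 0) := by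
  have hv : v ∈ ⨆ μ, Module.End.maxGenEigenspace (toLin' A) μ := by
    rw [Module.End.iSup_maxGenEigenspace_eq_top]
    trivial
  induction hv using Submodule.iSup_induction' with
  | mem μ w hw =>
    rcases eq_or_ne w 0 with rfl | hw0
    · simp
    refine tendsto_exp_smul_mulVec_of_mem_maxGenEigenspace (hA μ ?_) hw
    exact spectrum_toLin' A ▸ Module.End.mem_spectrum_of_mem_maxGenEigenspace hw hw0
  | zero => simp
  | add x y _ _ hx hy => simpa [mulVec_add] using hx.add hy

end Matrix

/-- Stability criterion: `‖exp (t • A)‖ → 0` as `t → ∞` if and only if every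
eigenvalue of `A` has negative real part. -/
theorem matrix_exp_tendsto_zero_iff_spectrum_re_neg (n : ℕ)
    (A : Matrix (Fin n) (Fin n) ℂ) :
    Filter.Tendsto (fun t : ℝ => ‖exp (t • A)‖) Filter.atTop (nhds 0) ↔
      ∀ μ ∈ spectrum ℂ A, μ.re < 0 :=
  ⟨fun h _ hμ => spectrum.re_neg_of_tendsto_norm_exp_smul h hμ, fun h =>
    tendsto_zero_iff_norm_tendsto_zero.1 <|
      tendsto_zero_of_forall_tendsto_mulVec (tendsto_exp_smul_mulVec h)⟩
end

section
/- Let H : ℝ → Matrix (Fin n) (Fin n) ℝ be continuous and suppose H(s) * H(s') = H(s') * H(s) for all s, s' ∈ ℝ. Define the Dyson terms recursively by U⁽⁰⁾(t) = 1 and U⁽ᵏ⁺¹⁾(t) = ∫₀ᵗ H(s) * U⁽ᵏ⁾(s) ds. Then for every k ≥ 0 and every t, U⁽ᵏ⁾(t) = (1/k!) * (∫₀ᵗ H(s) ds)^k. -/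
attribute [local instance] Matrix.linftyOpNormedRing Matrix.linftyOpNormedAlgebra

/-- The Dyson terms: `U⁽⁰⁾ = 1` and `U⁽ᵏ⁺¹⁾(t) = ∫₀ᵗ H(s) * U⁽ᵏ⁾(s) ds`. -/
noncomputable def dysonTerm {n : ℕ} (H : ℝ → Matrix (Fin n) (Fin n) ℝ) :
    ℕ → ℝ → Matrix (Fin n) (Fin n) ℝ
  | 0 => fun _ => 1
  | k + 1 => fun t => ∫ s in (0:ℝ)..t, H s * dysonTerm H k s

/-!
If `H` commutes with itself at all times, then `H(s)` commutes with `F(s) = ∫₀ˢ H`, so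
`((k+1)!)⁻¹ F^(k+1)` has derivative `(k!)⁻¹ H F^k`, which is the integrand of `U⁽ᵏ⁺¹⁾`
once `U⁽ᵏ⁾ = (k!)⁻¹ F^k` is known; the fundamental theorem of calculus closes the induction.
-/

open intervalIntegral

theorem HasDerivAt.fun_pow_succ_of_commute {𝕜 𝔸 : Type*} [NontriviallyNormedField 𝕜]
    [NormedRing 𝔸] [NormedAlgebra 𝕜 𝔸] {f : 𝕜 → 𝔸} {f' : 𝔸} {x : 𝕜}
    (h : HasDerivAt f f' x) (hc : Commute f' (f x)) (n : ℕ) :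
    HasDerivAt (fun y => f y ^ (n + 1)) ((n + 1) • (f' * f x ^ n)) x := by
  refine (h.fun_pow' (n + 1)).congr_deriv ?_
  have hterm : ∀ i ∈ Finset.range (n + 1), f x ^ (n - i) * f' * f x ^ i = f' * f x ^ n := by
    intro i hi
    rw [← (hc.pow_right _).eq, mul_assoc, ← pow_add,
      Nat.sub_add_cancel (Nat.lt_succ_iff.mp (Finset.mem_range.mp hi))]
  rw [Nat.pred_succ, Finset.sum_congr rfl hterm, Finset.sum_const, Finset.card_range]

section

variable {A : Type*} [NormedRing A] [NormedAlgebra ℝ A] [CompleteSpace A]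

theorem Commute.intervalIntegral_right {c : A} {f : ℝ → A} {a b : ℝ}
    (h : ∀ x, Commute c (f x)) : Commute c (∫ x in a..b, f x) := by
  by_cases hf : IntervalIntegrable f MeasureTheory.volume a b
  · have hleft := ((ContinuousLinearMap.mul ℝ A) c).intervalIntegral_comp_comm hf
    have hright := ((ContinuousLinearMap.mul ℝ A).flip c).intervalIntegral_comp_comm hf
    simp only [ContinuousLinearMap.mul_apply', ContinuousLinearMap.flip_apply] at hleft hright
    rw [Commute, SemiconjBy, ← hleft, ← hright]
    exact integral_congr fun x _ => h x
  · rw [integral_undef hf]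
    exact Commute.zero_right c

theorem integral_mul_pow_integral_of_commute {f : ℝ → A} (hf : Continuous f)
    (hcomm : ∀ s s', Commute (f s) (f s')) (k : ℕ) (t : ℝ) :
    ∫ s in (0:ℝ)..t, f s * (∫ x in (0:ℝ)..s, f x) ^ k
      = ((k : ℝ) + 1)⁻¹ • (∫ x in (0:ℝ)..t, f x) ^ (k + 1) := by
  set F : ℝ → A := fun u => ∫ x in (0:ℝ)..u, f x
  have hF : ∀ s, HasDerivAt F (f s) s := fun s => (hf.integral_hasStrictDerivAt 0 s).hasDerivAt
  have hFc : Continuous F := continuous_iff_continuousAt.mpr fun s => (hF s).continuousAt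
  have hderiv : ∀ s ∈ Set.uIcc (0:ℝ) t,
      HasDerivAt (fun u => ((k : ℝ) + 1)⁻¹ • F u ^ (k + 1)) (f s * F s ^ k) s := by
    intro s _
    refine (((hF s).fun_pow_succ_of_commute
      (Commute.intervalIntegral_right fun x => hcomm s x) k).const_smul ((k : ℝ) + 1)⁻¹).congr_deriv ?_
    rw [← Nat.cast_smul_eq_nsmul ℝ, smul_smul, Nat.cast_succ,
      inv_mul_cancel₀ (Nat.cast_add_one_ne_zero k), one_smul]
  rw [integral_eq_sub_of_hasDerivAt hderiv ((hf.mul (hFc.pow k)).intervalIntegrable 0 t)]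
  simp [F]

end

/-- For a continuous matrix function commuting with itself at all times, the `k`-th
Dyson term equals `(1/k!) (∫₀ᵗ H(s) ds)^k`. -/
theorem dysonTerm_eq_of_commute (n : ℕ) (H : ℝ → Matrix (Fin n) (Fin n) ℝ)
    (hHcont : Continuous H)
    (hcomm : ∀ s s' : ℝ, H s * H s' = H s' * H s) :
    ∀ (k : ℕ) (t : ℝ),
      dysonTerm H k t = ((k.factorial : ℝ)⁻¹) • (∫ s in (0:ℝ)..t, H s) ^ k := by
  intro k
  induction k with
  | zero => intro t; simp [dysonTerm]
  | succ k ih =>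
    intro t
    calc dysonTerm H (k + 1) t
        = ∫ s in (0:ℝ)..t, (k.factorial : ℝ)⁻¹ • (H s * (∫ x in (0:ℝ)..s, H x) ^ k) :=
          integral_congr fun s _ => by rw [← mul_smul_comm, ← ih s]
      _ = (k.factorial : ℝ)⁻¹ • (((k : ℝ) + 1)⁻¹ • (∫ s in (0:ℝ)..t, H s) ^ (k + 1)) := by
          rw [integral_smul, integral_mul_pow_integral_of_commute hHcont hcomm]
      _ = ((k + 1).factorial : ℝ)⁻¹ • (∫ s in (0:ℝ)..t, H s) ^ (k + 1) := by
          rw [smul_smul, Nat.factorial_succ, Nat.cast_mul, Nat.cast_succ, mul_inv, mul_comm]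
end

section
/- Let H : ℝ → Matrix (Fin n) (Fin n) ℝ be continuous and suppose H(s) * H(s') = H(s') * H(s) for all s, s' ∈ ℝ. Then the function U(t) := Matrix.exp (∫₀ᵗ H(s) ds) satisfies U(0) = 1 and, for every t, U is differentiable at t with derivative H(t) * U(t); that is, in the commuting case the propagator of the linear system equals the matrix exponential of the integral of H. -/
/-!
If all values `H s` commute, then multiplication by `H t` commutes with integration, so the
integrals `A u = ∫₀ᵘ H` commute with each other and with every `H t`. Hence
`exp (A u) = exp (A t) * exp (A u - A t)`, and since `exp` has derivative `1` at `0`, the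
derivative of `u ↦ exp (A u)` at `t` is `exp (A t) * A' t = exp (A t) * H t = H t * exp (A t)`.
-/

attribute [local instance] Matrix.linftyOpNormedRing Matrix.linftyOpNormedAlgebra

open NormedSpace MeasureTheory Set

theorem Commute.intervalIntegral_right_s6 {A : Type*} [NormedRing A] [NormedAlgebra ℝ A]
    {f : ℝ → A} {M : A} {a b : ℝ} {μ : Measure ℝ} (hf : IntervalIntegrable f μ a b)
    (h : ∀ x ∈ uIcc a b, Commute M (f x)) :
    Commute M (∫ x in a..b, f x ∂μ) :=
  calc M * ∫ x in a..b, f x ∂μ = ∫ x in a..b, M * f x ∂μ := (hf.integral_smul M).symm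
    _ = ∫ x in a..b, f x * M ∂μ := intervalIntegral.integral_congr fun x hx => (h x hx).eq
    _ = (∫ x in a..b, f x ∂μ) * M := hf.integral_smul (MulOpposite.op M)

theorem HasDerivAt.exp_of_commute {𝕂 𝔸 : Type*} [RCLike 𝕂] [NormedRing 𝔸] [NormedAlgebra 𝕂 𝔸]
    [CompleteSpace 𝔸] {A : 𝕂 → 𝔸} {a : 𝔸} {t : 𝕂} (hA : HasDerivAt A a t)
    (hc : ∀ u, Commute (A t) (A u)) :
    HasDerivAt (fun u => NormedSpace.exp (A u)) (NormedSpace.exp (A t) * a) t := by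
  -- `exp` does not depend on the choice of `ℚ`-algebra structure
  let : NormedAlgebra ℚ 𝔸 := NormedAlgebra.restrictScalars ℚ 𝕂 𝔸
  have hsplit : (fun u => NormedSpace.exp (A u)) =
      fun u => NormedSpace.exp (A t) * NormedSpace.exp (A u - A t) := by
    funext u
    rw [← exp_add_of_commute ((hc u).sub_right (Commute.refl _)), add_sub_cancel]
  have hshift : HasDerivAt (fun u => NormedSpace.exp (A u - A t)) a t := by
    have hexp : HasFDerivAt NormedSpace.exp (1 : 𝔸 →L[𝕂] 𝔸) (A t - A t) := by
      rw [sub_self]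
      exact hasFDerivAt_exp_zero
    exact hexp.comp_hasDerivAt t (hA.sub_const (A t))
  rw [hsplit]
  exact hshift.const_mul _

/-- For a continuous matrix function commuting with itself at all times, the matrix
exponential of the integral `U(t) := exp (∫₀ᵗ H(s) ds)` is the propagator:
`U 0 = 1` and `U' (t) = H t * U t` for all `t`. -/
theorem exp_integral_isPropagator_of_commute (n : ℕ)
    (H : ℝ → Matrix (Fin n) (Fin n) ℝ)
    (hHcont : Continuous H)
    (hcomm : ∀ s s' : ℝ, H s * H s' = H s' * H s) :
    exp (∫ s in (0:ℝ)..(0:ℝ), H s) = 1 ∧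
      ∀ t : ℝ, HasDerivAt (fun u : ℝ => exp (∫ s in (0:ℝ)..u, H s))
        (H t * exp (∫ s in (0:ℝ)..t, H s)) t := by
  refine ⟨by simp, fun t => ?_⟩
  have hH_integral : ∀ t u, Commute (H t) (∫ s in (0:ℝ)..u, H s) := fun t u =>
    Commute.intervalIntegral_right_s6 (hHcont.intervalIntegrable 0 u) fun s _ => hcomm t s
  have hintegrals : ∀ u, Commute (∫ s in (0:ℝ)..t, H s) (∫ s in (0:ℝ)..u, H s) := fun u =>
    Commute.intervalIntegral_right_s6 (hHcont.intervalIntegrable 0 u) fun s _ =>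
      (hH_integral s t).symm
  rw [(hH_integral t t).exp_right.eq]
  exact (hHcont.integral_hasStrictDerivAt 0 t).hasDerivAt.exp_of_commute hintegrals
end

section
/- Let g, ℓ, ω > 0, A ∈ ℝ, T := 2π/ω, and σ ∈ {1, −1}. Define α_σ(t) := σ * (A ω² cos(ω t) − g) / ℓ and H_σ(t) := !![0, 1; α_σ(t), 0]. Then the second-order Magnus term over one period vanishes: ∫₀ᵀ (∫₀^{t₁} H_σ(t₁) * H_σ(t₂) dt₂) dt₁ − (1/2) • (∫₀ᵀ H_σ(t) dt)² = 0. -/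
/-!
For a Hill matrix `H(t) = !![0, 1; α t, 0]` one has `H(t₁) H(t₂) = diag(α t₂, α t₁)` and
`(∫₀ᵀ H)² = (T ∫₀ᵀ α) • 1`; after an integration by parts the second Magnus term is
`(∫₀ᵀ t α(t) dt − (T/2) ∫₀ᵀ α) • diag(−1, 1)`. This first moment of `α` about `T/2` vanishes
whenever `α(T − t) = α(t)`, and the Kapitza coefficient is such a function over one period,
since `cos(ω (T − t)) = cos(2π − ω t) = cos(ω t)`.
-/

attribute [local instance] Matrix.linftyOpNormedRing Matrix.linftyOpNormedAlgebra

/-- The linearized Kapitza system matrix `H_σ(t) = !![0, 1; α_σ(t), 0]` with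
`α_σ(t) = σ (A ω² cos(ω t) − g) / ℓ`. -/
noncomputable def kapitzaH (g ℓ ω A σ : ℝ) (t : ℝ) : Matrix (Fin 2) (Fin 2) ℝ :=
  !![0, 1; σ * (A * ω ^ 2 * Real.cos (ω * t) - g) / ℓ, 0]

open MeasureTheory intervalIntegral Matrix

theorem Matrix.intervalIntegral_apply {n : Type*} [Fintype n] [DecidableEq n]
    {f : ℝ → Matrix n n ℝ} (hf : Continuous f) (a b : ℝ) (i j : n) :
    (∫ t in a..b, f t) i j = ∫ t in a..b, f t i j :=
  ((entryLinearMap ℝ ℝ i j).toContinuousLinearMap.intervalIntegral_comp_comm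
    (hf.intervalIntegrable a b)).symm

theorem Matrix.intervalIntegral_fin_two {p q r s : ℝ → ℝ} (hp : Continuous p)
    (hq : Continuous q) (hr : Continuous r) (hs : Continuous s) (a b : ℝ) :
    ∫ t in a..b, !![p t, q t; r t, s t] =
      !![∫ t in a..b, p t, ∫ t in a..b, q t; ∫ t in a..b, r t, ∫ t in a..b, s t] := by
  have hf : Continuous fun t => !![p t, q t; r t, s t] := by
    refine continuous_matrix fun i j => ?_
    fin_cases i <;> fin_cases j <;> assumption
  ext i j
  rw [Matrix.intervalIntegral_apply hf]
  fin_cases i <;> fin_cases j <;> rfl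

noncomputable def magnusSecond {n : Type*} [Fintype n] [DecidableEq n] (H : ℝ → Matrix n n ℝ)
    (T : ℝ) : Matrix n n ℝ :=
  (∫ t₁ in (0:ℝ)..T, ∫ t₂ in (0:ℝ)..t₁, H t₁ * H t₂) - (1 / 2 : ℝ) • (∫ t in (0:ℝ)..T, H t) ^ 2

/-- `x' = hillMatrix α t *ᵥ x` is Hill's equation `x₁'' = α(t) x₁` in first-order form. -/
def hillMatrix (α : ℝ → ℝ) (t : ℝ) : Matrix (Fin 2) (Fin 2) ℝ :=
  !![0, 1; α t, 0]

section Hill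

variable {α : ℝ → ℝ}

theorem hillMatrix_mul (s t : ℝ) :
    hillMatrix α s * hillMatrix α t = !![α t, 0; 0, α s] := by
  simp [hillMatrix]

theorem integral_hillMatrix (hα : Continuous α) (a b : ℝ) :
    ∫ t in a..b, hillMatrix α t = !![0, b - a; ∫ t in a..b, α t, 0] := by
  simp only [hillMatrix]
  rw [intervalIntegral_fin_two continuous_const continuous_const hα continuous_const]
  simp

theorem integral_primitive_eq_mul_sub_integral_mul (hα : Continuous α) (T : ℝ) :
    ∫ t in (0:ℝ)..T, ∫ s in (0:ℝ)..t, α s =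
      T * (∫ t in (0:ℝ)..T, α t) - ∫ t in (0:ℝ)..T, t * α t := by
  have hparts := integral_mul_deriv_eq_deriv_mul (a := 0) (b := T)
    (fun t _ => (hα.integral_hasStrictDerivAt 0 t).hasDerivAt) (fun t _ => hasDerivAt_id t)
    (hα.intervalIntegrable 0 T) intervalIntegrable_const
  simpa only [mul_one, one_mul, integral_same, zero_mul, sub_zero, id, mul_comm] using hparts

theorem magnusSecond_hillMatrix (hα : Continuous α) (T : ℝ) :
    magnusSecond (hillMatrix α) T =
      ((∫ t in (0:ℝ)..T, t * α t) - T / 2 * ∫ t in (0:ℝ)..T, α t) • !![-1, 0; 0, 1] := by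
  have hprimitive : Continuous fun t => ∫ s in (0:ℝ)..t, α s :=
    continuous_primitive (fun a b => hα.intervalIntegrable a b) 0
  have inner (t₁ : ℝ) : ∫ t₂ in (0:ℝ)..t₁, hillMatrix α t₁ * hillMatrix α t₂ =
      !![∫ s in (0:ℝ)..t₁, α s, 0; 0, t₁ * α t₁] := by
    simp only [hillMatrix_mul]
    rw [intervalIntegral_fin_two hα continuous_const continuous_const continuous_const]
    simp
  simp only [magnusSecond, inner, integral_hillMatrix hα]
  rw [intervalIntegral_fin_two hprimitive continuous_const continuous_const (by fun_prop),
    integral_primitive_eq_mul_sub_integral_mul hα]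
  ext i j
  fin_cases i <;> fin_cases j <;> simp [sq] <;> ring

theorem integral_id_mul_eq_of_symm {T : ℝ} (hα : IntervalIntegrable α volume 0 T)
    (hsymm : ∀ t ∈ Set.uIcc 0 T, α (T - t) = α t) :
    ∫ t in (0:ℝ)..T, t * α t = T / 2 * ∫ t in (0:ℝ)..T, α t := by
  have hreflect : ∫ t in (0:ℝ)..T, t * α t = ∫ t in (0:ℝ)..T, (T * α t - t * α t) :=
    calc ∫ t in (0:ℝ)..T, t * α t = ∫ t in (0:ℝ)..T, (T - t) * α (T - t) := by
          simpa using (integral_comp_sub_left (a := 0) (b := T) (fun t => t * α t) T).symm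
      _ = ∫ t in (0:ℝ)..T, (T * α t - t * α t) :=
          integral_congr fun t ht => by rw [hsymm t ht, sub_mul]
  rw [integral_sub (hα.const_mul T) (hα.continuousOn_mul (continuousOn_id' _)),
    intervalIntegral.integral_const_mul] at hreflect
  linarith

end Hill

theorem kapitza_magnus_second_vanishes_general (g ℓ ω A σ : ℝ) (hω : 0 < ω) :
    (∫ t₁ in (0:ℝ)..(2 * Real.pi / ω),
        ∫ t₂ in (0:ℝ)..t₁, kapitzaH g ℓ ω A σ t₁ * kapitzaH g ℓ ω A σ t₂) -
      (1 / 2 : ℝ) • (∫ t in (0:ℝ)..(2 * Real.pi / ω), kapitzaH g ℓ ω A σ t) ^ 2 = 0 := by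
  set α : ℝ → ℝ := fun t => σ * (A * ω ^ 2 * Real.cos (ω * t) - g) / ℓ
  have hα : Continuous α := by fun_prop
  have hsymm (t : ℝ) : α (2 * Real.pi / ω - t) = α t := by
    simp only [α, mul_sub, mul_div_cancel₀ _ hω.ne', Real.cos_two_pi_sub]
  show magnusSecond (hillMatrix α) (2 * Real.pi / ω) = 0
  rw [magnusSecond_hillMatrix hα,
    integral_id_mul_eq_of_symm (hα.intervalIntegrable _ _) fun t _ => hsymm t, sub_self,
    zero_smul]

/-- The second Magnus term for Kapitza's pendulum over one period `T = 2π/ω` vanishes: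
`Ω⁽²⁾(T) = U⁽²⁾(T) − (1/2)(Ω⁽¹⁾(T))² = 0`. -/
theorem kapitza_magnus_second_vanishes (g ℓ ω A σ : ℝ) (hg : 0 < g) (hℓ : 0 < ℓ)
    (hω : 0 < ω) (hσ : σ = 1 ∨ σ = -1) :
    (∫ t₁ in (0:ℝ)..(2 * Real.pi / ω),
        ∫ t₂ in (0:ℝ)..t₁, kapitzaH g ℓ ω A σ t₁ * kapitzaH g ℓ ω A σ t₂) -
      (1 / 2 : ℝ) • (∫ t in (0:ℝ)..(2 * Real.pi / ω), kapitzaH g ℓ ω A σ t) ^ 2 = 0 :=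
  kapitza_magnus_second_vanishes_general g ℓ ω A σ hω
end

section
/- Let g, ℓ, ω > 0, A ∈ ℝ, T := 2π/ω, and σ ∈ {1, −1}. Define α_σ(t) := σ * (A ω² cos(ω t) − g) / ℓ and H_σ(t) := !![0, 1; α_σ(t), 0]. Then the third Dyson term over one period equals U⁽³⁾(T) := ∫₀ᵀ ∫₀^{t₁} ∫₀^{t₂} H_σ(t₁) * H_σ(t₂) * H_σ(t₃) dt₃ dt₂ dt₁ = !![0, −σ (g T³/(6ℓ) + 2 A T/ℓ); −A² ω² T/(2 ℓ²) − 2 A g T/ℓ² + g² T³/(6 ℓ²), 0]. -/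
attribute [local instance] Matrix.linftyOpNormedRing Matrix.linftyOpNormedAlgebra

/-! The system matrices `!![0, 1; α t, 0]` multiply as
`!![0, 1; x, 0] * !![0, 1; y, 0] * !![0, 1; z, 0] = !![0, y; x * z, 0]`, so the third Dyson term of
`x'' = α(t) x` is antidiagonal with entries `∫∫ s α(s)` and `∫ α(t₁) ∫∫ α`. For
`α = (σ / ℓ) (A ω² cos (ω t) - g)` both are computed from explicit antiderivatives; at `T = 2π/ω`
every `sin (ω T)` vanishes and `cos (ω T) = 1`, and `σ² = 1` removes `σ` from the second entry. -/

open MeasureTheory Real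

theorem companion_mul_companion_mul_companion {R : Type*} [Ring R] (x y z : R) :
    !![0, 1; x, 0] * !![0, 1; y, 0] * !![0, 1; z, 0] = !![0, y; x * z, 0] := by
  simp

theorem intervalIntegral_antidiag {b c : ℝ → ℝ} {x y : ℝ}
    (hb : IntervalIntegrable b volume x y) (hc : IntervalIntegrable c volume x y) :
    ∫ t in x..y, !![0, b t; c t, 0] = !![0, ∫ t in x..y, b t; ∫ t in x..y, c t, 0] := by
  have hsplit (p q : ℝ) : !![0, p; q, 0] = p • !![0, 1; 0, 0] + q • !![(0 : ℝ), 0; 1, 0] := by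
    ext i j; fin_cases i <;> fin_cases j <;> simp
  rw [intervalIntegral.integral_congr fun t _ => hsplit (b t) (c t),
    intervalIntegral.integral_add ⟨hb.1.smul_const _, hb.2.smul_const _⟩
      ⟨hc.1.smul_const _, hc.2.smul_const _⟩,
    intervalIntegral.integral_smul_const, intervalIntegral.integral_smul_const, ← hsplit]

theorem dyson_third_companion {α : ℝ → ℝ} (hα : Continuous α) (T : ℝ) :
    ∫ t₁ in 0..T, ∫ t₂ in 0..t₁, ∫ t₃ in 0..t₂,
        !![0, 1; α t₁, 0] * !![0, 1; α t₂, 0] * !![0, 1; α t₃, 0] =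
      !![0, ∫ t₁ in 0..T, ∫ s in 0..t₁, s * α s;
        ∫ t₁ in 0..T, α t₁ * ∫ t₂ in 0..t₁, ∫ t₃ in 0..t₂, α t₃, 0] := by
  have hprim : Continuous fun x => ∫ s in 0..x, α s :=
    intervalIntegral.continuous_primitive (fun _ _ => hα.intervalIntegrable _ _) 0
  have hprim2 : Continuous fun x => ∫ y in 0..x, ∫ s in 0..y, α s :=
    intervalIntegral.continuous_primitive (fun _ _ => hprim.intervalIntegrable _ _) 0
  have hmul : Continuous fun s => s * α s := by fun_prop
  have hmom : Continuous fun x => ∫ s in 0..x, s * α s :=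
    intervalIntegral.continuous_primitive (fun _ _ => hmul.intervalIntegrable _ _) 0
  simp only [companion_mul_companion_mul_companion]
  rw [intervalIntegral.integral_congr fun t₁ _ => intervalIntegral.integral_congr fun t₂ _ =>
    intervalIntegral_antidiag intervalIntegrable_const ((hα.const_mul _).intervalIntegrable _ _)]
  simp only [intervalIntegral.integral_const, intervalIntegral.integral_const_mul, sub_zero,
    smul_eq_mul]
  rw [intervalIntegral.integral_congr fun t₁ _ => intervalIntegral_antidiag
      (hmul.intervalIntegrable _ _)
      ((hprim.const_mul _).intervalIntegrable _ _)]
  simp only [intervalIntegral.integral_const_mul]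
  exact intervalIntegral_antidiag (hmom.intervalIntegrable _ _)
    ((hα.mul hprim2).intervalIntegrable _ _)

theorem hasDerivAt_sin_mul_div {ω : ℝ} (hω : ω ≠ 0) (t : ℝ) :
    HasDerivAt (fun s => sin (ω * s) / ω) (cos (ω * t)) t :=
  (((hasDerivAt_id' t).const_mul ω).sin.div_const ω).congr_deriv (by field_simp)

section Drive

variable (A ω g : ℝ)

theorem integral_drive (x : ℝ) :
    ∫ s in 0..x, (A * ω ^ 2 * cos (ω * s) - g) = A * ω * sin (ω * x) - g * x := by
  have hF (t : ℝ) : HasDerivAt (fun s => A * ω * sin (ω * s) - g * s)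
      (A * ω ^ 2 * cos (ω * t) - g) t :=
    ((((hasDerivAt_id' t).const_mul ω).sin.const_mul (A * ω)).sub
      ((hasDerivAt_id' t).const_mul g)).congr_deriv (by ring)
  rw [intervalIntegral.integral_eq_sub_of_hasDerivAt (fun t _ => hF t)
    ((by fun_prop : Continuous _).intervalIntegrable _ _)]
  simp

theorem integral_integral_drive (x : ℝ) :
    ∫ y in 0..x, ∫ s in 0..y, (A * ω ^ 2 * cos (ω * s) - g) =
      A - A * cos (ω * x) - g * x ^ 2 / 2 := by
  have hF (t : ℝ) : HasDerivAt (fun s => -(A * cos (ω * s)) - g * s ^ 2 / 2)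
      (A * ω * sin (ω * t) - g * t) t :=
    ((((hasDerivAt_id' t).const_mul ω).cos.const_mul A).neg.sub
      (((hasDerivAt_pow 2 t).const_mul g).div_const 2)).congr_deriv (by ring)
  simp only [integral_drive]
  rw [intervalIntegral.integral_eq_sub_of_hasDerivAt (fun t _ => hF t)
    ((by fun_prop : Continuous _).intervalIntegrable _ _)]
  simp only [mul_zero, cos_zero]
  ring

theorem integral_mul_drive (x : ℝ) :
    ∫ s in 0..x, s * (A * ω ^ 2 * cos (ω * s) - g) =
      A * ω * x * sin (ω * x) + A * cos (ω * x) - A - g * x ^ 2 / 2 := by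
  have hF (t : ℝ) : HasDerivAt (fun s => A * ω * s * sin (ω * s) + A * cos (ω * s) - g * s ^ 2 / 2)
      (t * (A * ω ^ 2 * cos (ω * t) - g)) t :=
    (((((hasDerivAt_id' t).const_mul (A * ω)).mul ((hasDerivAt_id' t).const_mul ω).sin).add
      (((hasDerivAt_id' t).const_mul ω).cos.const_mul A)).sub
      (((hasDerivAt_pow 2 t).const_mul g).div_const 2)).congr_deriv (by ring)
  rw [intervalIntegral.integral_eq_sub_of_hasDerivAt (fun t _ => hF t)
    ((by fun_prop : Continuous _).intervalIntegrable _ _)]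
  simp only [mul_zero, sin_zero, cos_zero]
  ring

variable {A ω g} {T : ℝ}

theorem integral_integral_mul_drive_of_mul_eq_two_pi (hT : ω * T = 2 * π) :
    ∫ t in 0..T, ∫ s in 0..t, s * (A * ω ^ 2 * cos (ω * s) - g) =
      -(2 * A * T) - g * T ^ 3 / 6 := by
  have hω : ω ≠ 0 := left_ne_zero_of_mul (hT ▸ two_pi_pos.ne')
  have hF (t : ℝ) : HasDerivAt
      (fun s => -(A * s * cos (ω * s)) + 2 * A * (sin (ω * s) / ω) - A * s - g * s ^ 3 / 6)
      (A * ω * t * sin (ω * t) + A * cos (ω * t) - A - g * t ^ 2 / 2) t :=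
    (((((hasDerivAt_id' t).const_mul A).mul ((hasDerivAt_id' t).const_mul ω).cos).neg.add
      ((hasDerivAt_sin_mul_div hω t).const_mul (2 * A))).sub
      ((hasDerivAt_id' t).const_mul A)).sub
      (((hasDerivAt_pow 3 t).const_mul g).div_const 6) |>.congr_deriv (by ring)
  simp only [integral_mul_drive]
  rw [intervalIntegral.integral_eq_sub_of_hasDerivAt (fun t _ => hF t)
    ((by fun_prop : Continuous _).intervalIntegrable _ _)]
  simp only [hT, sin_two_pi, cos_two_pi, mul_zero, sin_zero, cos_zero]
  ring

theorem integral_drive_mul_integral_integral_drive_of_mul_eq_two_pi (hT : ω * T = 2 * π) :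
    ∫ t in 0..T, (A * ω ^ 2 * cos (ω * t) - g) *
        ∫ y in 0..t, ∫ s in 0..y, (A * ω ^ 2 * cos (ω * s) - g) =
      -(A ^ 2 * ω ^ 2 * T / 2) - 2 * A * g * T + g ^ 2 * T ^ 3 / 6 := by
  have hω : ω ≠ 0 := left_ne_zero_of_mul (hT ▸ two_pi_pos.ne')
  have hF (t : ℝ) : HasDerivAt
      (fun s => A ^ 2 * ω * sin (ω * s) - A ^ 2 * ω ^ 2 * s / 2
        - A ^ 2 * ω / 2 * (sin (ω * s) * cos (ω * s)) - A * g * ω / 2 * (s ^ 2 * sin (ω * s))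
        - A * g * (s * cos (ω * s)) + 2 * A * g * (sin (ω * s) / ω) - A * g * s + g ^ 2 * s ^ 3 / 6)
      ((A * ω ^ 2 * cos (ω * t) - g) * (A - A * cos (ω * t) - g * t ^ 2 / 2)) t := by
    have hsin := ((hasDerivAt_id' t).const_mul ω).sin
    have hcos := ((hasDerivAt_id' t).const_mul ω).cos
    refine (((((((hsin.const_mul (A ^ 2 * ω)).sub
      (((hasDerivAt_id' t).const_mul (A ^ 2 * ω ^ 2)).div_const 2)).sub
      ((hsin.mul hcos).const_mul (A ^ 2 * ω / 2))).sub
      (((hasDerivAt_pow 2 t).mul hsin).const_mul (A * g * ω / 2))).sub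
      (((hasDerivAt_id' t).mul hcos).const_mul (A * g))).add
      ((hasDerivAt_sin_mul_div hω t).const_mul (2 * A * g))).sub
      ((hasDerivAt_id' t).const_mul (A * g))).add
      (((hasDerivAt_pow 3 t).const_mul (g ^ 2)).div_const 6) |>.congr_deriv ?_
    linear_combination (A ^ 2 * ω ^ 2 / 2) * sin_sq_add_cos_sq (ω * t)
  simp only [integral_integral_drive]
  rw [intervalIntegral.integral_eq_sub_of_hasDerivAt (fun t _ => hF t)
    ((by fun_prop : Continuous _).intervalIntegrable _ _)]
  simp only [hT, sin_two_pi, cos_two_pi, mul_zero, sin_zero, cos_zero]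
  ring

end Drive

theorem kapitza_dyson_third_general (g ℓ ω A σ : ℝ) (hω : 0 < ω)
    (hσ : σ = 1 ∨ σ = -1) :
    (∫ t₁ in (0:ℝ)..(2 * Real.pi / ω), ∫ t₂ in (0:ℝ)..t₁, ∫ t₃ in (0:ℝ)..t₂,
        kapitzaH g ℓ ω A σ t₁ * kapitzaH g ℓ ω A σ t₂ * kapitzaH g ℓ ω A σ t₃) =
      !![0, -σ * (g * (2 * Real.pi / ω) ^ 3 / (6 * ℓ) + 2 * A * (2 * Real.pi / ω) / ℓ);
         -A ^ 2 * ω ^ 2 * (2 * Real.pi / ω) / (2 * ℓ ^ 2) -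
             2 * A * g * (2 * Real.pi / ω) / ℓ ^ 2 +
             g ^ 2 * (2 * Real.pi / ω) ^ 3 / (6 * ℓ ^ 2), 0] := by
  have hT : ω * (2 * π / ω) = 2 * π := mul_div_cancel₀ _ hω.ne'
  have hσ2 : σ ^ 2 = 1 := by rcases hσ with rfl | rfl <;> norm_num
  have hσℓ (x : ℝ) : σ / ℓ * (σ / ℓ * x) = x / ℓ ^ 2 := by
    rw [← mul_assoc, div_mul_div_comm, ← sq, ← sq, hσ2, one_div_mul_eq_div]
  have hH : kapitzaH g ℓ ω A σ =
      fun t => !![0, 1; σ / ℓ * (A * ω ^ 2 * cos (ω * t) - g), 0] := by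
    funext t; simp only [kapitzaH, mul_div_right_comm]
  rw [hH, dyson_third_companion (by fun_prop)]
  simp only [mul_left_comm _ (σ / ℓ), mul_assoc (σ / ℓ), intervalIntegral.integral_const_mul]
  rw [integral_integral_mul_drive_of_mul_eq_two_pi hT,
    integral_drive_mul_integral_integral_drive_of_mul_eq_two_pi hT, hσℓ]
  congr 4 <;> ring

/-- The third Dyson term for Kapitza's pendulum over one period `T = 2π/ω`:
`U⁽³⁾(T) = !![0, −σ(gT³/(6ℓ) + 2AT/ℓ); −A²ω²T/(2ℓ²) − 2AgT/ℓ² + g²T³/(6ℓ²), 0]`. -/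
theorem kapitza_dyson_third (g ℓ ω A σ : ℝ) (hg : 0 < g) (hℓ : 0 < ℓ) (hω : 0 < ω)
    (hσ : σ = 1 ∨ σ = -1) :
    (∫ t₁ in (0:ℝ)..(2 * Real.pi / ω), ∫ t₂ in (0:ℝ)..t₁, ∫ t₃ in (0:ℝ)..t₂,
        kapitzaH g ℓ ω A σ t₁ * kapitzaH g ℓ ω A σ t₂ * kapitzaH g ℓ ω A σ t₃) =
      !![0, -σ * (g * (2 * Real.pi / ω) ^ 3 / (6 * ℓ) + 2 * A * (2 * Real.pi / ω) / ℓ);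
         -A ^ 2 * ω ^ 2 * (2 * Real.pi / ω) / (2 * ℓ ^ 2) -
             2 * A * g * (2 * Real.pi / ω) / ℓ ^ 2 +
             g ^ 2 * (2 * Real.pi / ω) ^ 3 / (6 * ℓ ^ 2), 0] :=
  kapitza_dyson_third_general g ℓ ω A σ hω hσ
end

section
/- Let g, ℓ, ω > 0, A ∈ ℝ, T := 2π/ω, and σ ∈ {1, −1}. Define α_σ(t) := σ * (A ω² cos(ω t) − g) / ℓ and H_σ(t) := !![0, 1; α_σ(t), 0], and let Ω⁽¹⁾ := ∫₀ᵀ H_σ(t) dt and U⁽³⁾ := ∫₀ᵀ ∫₀^{t₁} ∫₀^{t₂} H_σ(t₁) * H_σ(t₂) * H_σ(t₃) dt₃ dt₂ dt₁. Then the third Magnus term satisfies Ω⁽³⁾ := U⁽³⁾ − (1/6) • (Ω⁽¹⁾)³ = T • !![0, −2σA/ℓ; −A² ω²/(2 ℓ²) − 2 A g/ℓ², 0]. -/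
attribute [local instance] Matrix.linftyOpNormedRing Matrix.linftyOpNormedAlgebra

/-! Write `H_σ(t) = !![0, 1; a(t), 0]` with `a(t) = P cos(ωt) + Q`, `P = σAω²/ℓ`, `Q = -σg/ℓ`.
A product of three such matrices is again off-diagonal,
`H(t₁) H(t₂) H(t₃) = !![0, a(t₂); a(t₁) a(t₃), 0]`, so `U⁽³⁾` reduces to two scalar iterated
integrals of trigonometric polynomials, evaluated by explicit antiderivatives; at `T = 2π/ω`
every `sin(ωT)` vanishes and `cos(ωT) = 1`. Subtracting the cube of `Ω⁽¹⁾ = !![0, T; QT, 0]`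
leaves `T • !![0, -2P/ω²; 2PQ/ω² - P²/(2ω²), 0]`, which is the claimed matrix since `σ² = 1`. -/

open Real intervalIntegral

lemma intervalIntegral_matrix_apply {n : Type*} [Fintype n] [DecidableEq n]
    {F : ℝ → Matrix n n ℝ} (hF : Continuous F) (a b : ℝ) (i j : n) :
    (∫ t in a..b, F t) i j = ∫ t in a..b, F t i j :=
  ((Matrix.entryLinearMap ℝ ℝ i j).toContinuousLinearMap.intervalIntegral_comp_comm
    (hF.intervalIntegrable a b)).symm

lemma intervalIntegral_matrix_fin_two {f₀₀ f₀₁ f₁₀ f₁₁ : ℝ → ℝ} (h₀₀ : Continuous f₀₀)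
    (h₀₁ : Continuous f₀₁) (h₁₀ : Continuous f₁₀) (h₁₁ : Continuous f₁₁) (a b : ℝ) :
    ∫ t in a..b, !![f₀₀ t, f₀₁ t; f₁₀ t, f₁₁ t] =
      !![∫ t in a..b, f₀₀ t, ∫ t in a..b, f₀₁ t; ∫ t in a..b, f₁₀ t, ∫ t in a..b, f₁₁ t] := by
  have hF : Continuous fun t => !![f₀₀ t, f₀₁ t; f₁₀ t, f₁₁ t] := by fun_prop
  ext i j
  fin_cases i <;> fin_cases j <;> simp [intervalIntegral_matrix_apply hF]

lemma offDiag_one_triple_mul (x y z : ℝ) :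
    !![(0 : ℝ), 1; x, 0] * !![0, 1; y, 0] * !![0, 1; z, 0] = !![0, y; x * z, 0] := by
  simp

lemma offDiag_pow_three (x y : ℝ) :
    !![(0 : ℝ), x; y, 0] ^ 3 = !![0, x * y * x; y * x * y, 0] := by
  simp [pow_succ]

lemma iteratedIntegral_offDiag_one_triple_mul {a : ℝ → ℝ} (ha : Continuous a) (T : ℝ) :
    (∫ t₁ in (0:ℝ)..T, ∫ t₂ in (0:ℝ)..t₁, ∫ t₃ in (0:ℝ)..t₂,
        !![(0 : ℝ), 1; a t₁, 0] * !![0, 1; a t₂, 0] * !![0, 1; a t₃, 0]) =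
      !![0, ∫ t₁ in (0:ℝ)..T, ∫ t₂ in (0:ℝ)..t₁, t₂ * a t₂;
        ∫ t₁ in (0:ℝ)..T, a t₁ * ∫ t₂ in (0:ℝ)..t₁, ∫ t₃ in (0:ℝ)..t₂, a t₃, 0] := by
  have hprim : ∀ {f : ℝ → ℝ}, Continuous f → Continuous fun t => ∫ s in (0:ℝ)..t, f s :=
    fun hf => continuous_primitive (fun _ _ => hf.intervalIntegrable _ _) 0
  have inner (t₁ t₂ : ℝ) : ∫ t₃ in (0:ℝ)..t₂, !![0, a t₂; a t₁ * a t₃, 0] =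
      !![0, t₂ * a t₂; a t₁ * ∫ t₃ in (0:ℝ)..t₂, a t₃, 0] :=
    (intervalIntegral_matrix_fin_two continuous_const continuous_const
      (continuous_const.mul ha) continuous_const _ _).trans (by simp)
  have middle (t₁ : ℝ) :
      ∫ t₂ in (0:ℝ)..t₁, !![0, t₂ * a t₂; a t₁ * ∫ t₃ in (0:ℝ)..t₂, a t₃, 0] =
        !![0, ∫ t₂ in (0:ℝ)..t₁, t₂ * a t₂;
          a t₁ * ∫ t₂ in (0:ℝ)..t₁, ∫ t₃ in (0:ℝ)..t₂, a t₃, 0] :=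
    (intervalIntegral_matrix_fin_two continuous_const (continuous_id.mul ha)
      (continuous_const.mul (hprim ha)) continuous_const _ _).trans (by simp)
  simp only [offDiag_one_triple_mul, inner, middle]
  exact (intervalIntegral_matrix_fin_two continuous_const (hprim (continuous_id.mul ha))
      (ha.mul (hprim (hprim ha))) continuous_const _ _).trans (by simp)

section Antiderivatives

variable (P Q : ℝ) {ω : ℝ}

lemma integral_cos_mul_add (hω : ω ≠ 0) (t : ℝ) :
    ∫ u in (0:ℝ)..t, (P * cos (ω * u) + Q) = P * sin (ω * t) / ω + Q * t := by
  have hF (u : ℝ) :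
      HasDerivAt (fun u => P * sin (ω * u) / ω + Q * u) (P * cos (ω * u) + Q) u := by
    refine ((((hasDerivAt_const_mul ω).sin.const_mul P).div_const ω).add
      ((hasDerivAt_id' u).const_mul Q)).congr_deriv ?_
    field_simp
  rw [integral_eq_sub_of_hasDerivAt (fun u _ => hF u)
    (Continuous.intervalIntegrable (by fun_prop) 0 t)]
  simp

lemma iteratedIntegral_cos_mul_add (hω : ω ≠ 0) (t : ℝ) :
    ∫ s in (0:ℝ)..t, ∫ u in (0:ℝ)..s, (P * cos (ω * u) + Q) =
      P * (1 - cos (ω * t)) / ω ^ 2 + Q * t ^ 2 / 2 := by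
  have hF (u : ℝ) : HasDerivAt (fun u => -(P * cos (ω * u) / ω ^ 2) + Q * u ^ 2 / 2)
      (P * sin (ω * u) / ω + Q * u) u := by
    refine ((((hasDerivAt_const_mul ω).cos.const_mul P).div_const (ω ^ 2)).neg.add
      (((hasDerivAt_pow 2 u).const_mul Q).div_const 2)).congr_deriv ?_
    field_simp
    ring
  simp only [integral_cos_mul_add P Q hω]
  rw [integral_eq_sub_of_hasDerivAt (fun u _ => hF u)
    (Continuous.intervalIntegrable (by fun_prop) 0 t)]
  simp only [mul_zero, cos_zero]
  ring

lemma integral_mul_cos_mul_add (hω : ω ≠ 0) (t : ℝ) :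
    ∫ u in (0:ℝ)..t, u * (P * cos (ω * u) + Q) =
      P * (t * sin (ω * t) / ω + (cos (ω * t) - 1) / ω ^ 2) + Q * t ^ 2 / 2 := by
  have hF (u : ℝ) : HasDerivAt
      (fun u => P * (u * sin (ω * u) / ω + cos (ω * u) / ω ^ 2) + Q * u ^ 2 / 2)
      (u * (P * cos (ω * u) + Q)) u := by
    refine (((((hasDerivAt_id' u).mul (hasDerivAt_const_mul ω).sin).div_const ω).add
      ((hasDerivAt_const_mul ω).cos.div_const (ω ^ 2))).const_mul P |>.add
      (((hasDerivAt_pow 2 u).const_mul Q).div_const 2)).congr_deriv ?_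
    field_simp
    ring
  rw [integral_eq_sub_of_hasDerivAt (fun u _ => hF u)
    (Continuous.intervalIntegrable (by fun_prop) 0 t)]
  simp only [mul_zero, sin_zero, cos_zero]
  ring

lemma iteratedIntegral_mul_cos_mul_add (hω : ω ≠ 0) (t : ℝ) :
    ∫ s in (0:ℝ)..t, ∫ u in (0:ℝ)..s, u * (P * cos (ω * u) + Q) =
      P * (2 * sin (ω * t) / ω ^ 3 - t * (cos (ω * t) + 1) / ω ^ 2) + Q * t ^ 3 / 6 := by
  have hF (u : ℝ) : HasDerivAt
      (fun u => P * (2 * sin (ω * u) / ω ^ 3 - u * (cos (ω * u) + 1) / ω ^ 2) + Q * u ^ 3 / 6)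
      (P * (u * sin (ω * u) / ω + (cos (ω * u) - 1) / ω ^ 2) + Q * u ^ 2 / 2) u := by
    refine ((((((hasDerivAt_const_mul ω).sin.const_mul 2).div_const (ω ^ 3)).sub
      (((hasDerivAt_id' u).mul ((hasDerivAt_const_mul ω).cos.add_const 1)).div_const
        (ω ^ 2))).const_mul P).add (((hasDerivAt_pow 3 u).const_mul Q).div_const 6)).congr_deriv ?_
    field_simp
    ring
  simp only [integral_mul_cos_mul_add P Q hω]
  rw [integral_eq_sub_of_hasDerivAt (fun u _ => hF u)
    (Continuous.intervalIntegrable (by fun_prop) 0 t)]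
  simp

lemma integral_cos_mul_add_mul_iteratedIntegral (hω : ω ≠ 0) (t : ℝ) :
    ∫ s in (0:ℝ)..t,
        (P * cos (ω * s) + Q) * ∫ u in (0:ℝ)..s, ∫ v in (0:ℝ)..u, (P * cos (ω * v) + Q) =
      P ^ 2 * (sin (ω * t) * (2 - cos (ω * t)) / (2 * ω ^ 3) - t / (2 * ω ^ 2)) +
        P * Q * (t ^ 2 * sin (ω * t) / (2 * ω) + t * (cos (ω * t) + 1) / ω ^ 2 -
          2 * sin (ω * t) / ω ^ 3) + Q ^ 2 * t ^ 3 / 6 := by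
  have hF (u : ℝ) : HasDerivAt
      (fun u => P ^ 2 * (sin (ω * u) * (2 - cos (ω * u)) / (2 * ω ^ 3) - u / (2 * ω ^ 2)) +
        P * Q * (u ^ 2 * sin (ω * u) / (2 * ω) + u * (cos (ω * u) + 1) / ω ^ 2 -
          2 * sin (ω * u) / ω ^ 3) + Q ^ 2 * u ^ 3 / 6)
      ((P * cos (ω * u) + Q) * (P * (1 - cos (ω * u)) / ω ^ 2 + Q * u ^ 2 / 2)) u := by
    have hsin := (hasDerivAt_const_mul (x := u) ω).sin
    have hcos := (hasDerivAt_const_mul (x := u) ω).cos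
    refine (((((hsin.mul (hcos.const_sub 2)).div_const (2 * ω ^ 3)).sub
      ((hasDerivAt_id' u).div_const (2 * ω ^ 2))).const_mul (P ^ 2)).add
      ((((((hasDerivAt_pow 2 u).mul hsin).div_const (2 * ω)).add
        (((hasDerivAt_id' u).mul (hcos.add_const 1)).div_const (ω ^ 2))).sub
        ((hsin.const_mul 2).div_const (ω ^ 3))).const_mul (P * Q)) |>.add
      (((hasDerivAt_pow 3 u).const_mul (Q ^ 2)).div_const 6)).congr_deriv ?_
    field_simp
    linear_combination 6 * P ^ 2 * sin_sq_add_cos_sq (ω * u)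
  simp only [iteratedIntegral_cos_mul_add P Q hω]
  rw [integral_eq_sub_of_hasDerivAt (fun u _ => hF u)
    (Continuous.intervalIntegrable (by fun_prop) 0 t)]
  simp

end Antiderivatives

theorem kapitza_magnus_third_general (g ℓ ω A σ : ℝ) (hω : 0 < ω)
    (hσ : σ = 1 ∨ σ = -1) :
    (∫ t₁ in (0:ℝ)..(2 * Real.pi / ω), ∫ t₂ in (0:ℝ)..t₁, ∫ t₃ in (0:ℝ)..t₂,
        kapitzaH g ℓ ω A σ t₁ * kapitzaH g ℓ ω A σ t₂ * kapitzaH g ℓ ω A σ t₃) -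
      (1 / 6 : ℝ) • (∫ t in (0:ℝ)..(2 * Real.pi / ω), kapitzaH g ℓ ω A σ t) ^ 3 =
      (2 * Real.pi / ω) •
        !![0, -2 * σ * A / ℓ;
           -A ^ 2 * ω ^ 2 / (2 * ℓ ^ 2) - 2 * A * g / ℓ ^ 2, 0] := by
  have hσ_sq : σ ^ 2 = 1 := by rcases hσ with rfl | rfl <;> norm_num
  have hω₀ : ω ≠ 0 := hω.ne'
  have hperiod : ω * (2 * π / ω) = 2 * π := by field_simp
  set P := σ * A * ω ^ 2 / ℓ
  set Q := -(σ * g) / ℓ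
  have hH : kapitzaH g ℓ ω A σ = fun t => !![0, 1; P * cos (ω * t) + Q, 0] := by
    funext t
    rw [kapitzaH]
    congr
    ring
  rw [hH, iteratedIntegral_offDiag_one_triple_mul (by fun_prop),
    intervalIntegral_matrix_fin_two continuous_const continuous_const (by fun_prop)
      continuous_const, integral_cos_mul_add_mul_iteratedIntegral P Q hω₀]
  simp only [integral_zero, integral_const, sub_zero, smul_eq_mul, mul_one, offDiag_pow_three,
    iteratedIntegral_mul_cos_mul_add P Q hω₀, integral_cos_mul_add P Q hω₀, hperiod, sin_two_pi,
    cos_two_pi, Matrix.smul_of, Matrix.of_sub_of, Matrix.smul_cons, Matrix.smul_empty,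
    Matrix.cons_sub_cons, Matrix.empty_sub_empty]
  congr 5
  · ring
  · simp only [P]
    field_simp
    ring
  · simp only [P, Q]
    field_simp
    rw [hσ_sq]
    ring
  · ring

/-- The third Magnus term for Kapitza's pendulum over one period `T = 2π/ω`:
`Ω⁽³⁾ = U⁽³⁾ − (1/6)(Ω⁽¹⁾)³ = T • !![0, −2σA/ℓ; −A²ω²/(2ℓ²) − 2Ag/ℓ², 0]`. -/
theorem kapitza_magnus_third (g ℓ ω A σ : ℝ) (hg : 0 < g) (hℓ : 0 < ℓ) (hω : 0 < ω)
    (hσ : σ = 1 ∨ σ = -1) :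
    (∫ t₁ in (0:ℝ)..(2 * Real.pi / ω), ∫ t₂ in (0:ℝ)..t₁, ∫ t₃ in (0:ℝ)..t₂,
        kapitzaH g ℓ ω A σ t₁ * kapitzaH g ℓ ω A σ t₂ * kapitzaH g ℓ ω A σ t₃) -
      (1 / 6 : ℝ) • (∫ t in (0:ℝ)..(2 * Real.pi / ω), kapitzaH g ℓ ω A σ t) ^ 3 =
      (2 * Real.pi / ω) •
        !![0, -2 * σ * A / ℓ;
           -A ^ 2 * ω ^ 2 / (2 * ℓ ^ 2) - 2 * A * g / ℓ ^ 2, 0] :=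
  kapitza_magnus_third_general g ℓ ω A σ hω hσ
end
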